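/- Fix J in N with J >= 1, rates lambda : Fin J -> R with lambda_j > 0, costs b : Fin J -> R with b_j > 0, capacities Q : Fin J -> N with Q_j >= 1, and a fixed replenishment cost A with 0 < A < sum over j of b_j * Q_j. Then there exists a unique T* > 0 satisfying sum over j of b_j * Q_j * Ptail(lambda_j * T*, Q_j + 1) = A, and this T* is the strict global minimizer of the fixed-cycle cost C_F(T) = (A + sum over j of b_j * S(lambda_j * T, Q_j)) / T over T in (0, infinity): C_F(T*) < C_F(T) for every T > 0 with T != T*. -/

import Mathlib

open scoped BigOperators

/-- Poisson probability mass function with mean `μ` at `r`. -/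
noncomputable def poissonPMF (μ : ℝ) (r : ℕ) : ℝ :=
  Real.exp (-μ) * μ ^ r / (Nat.factorial r)

/-- Poisson tail probability `P(D ≥ k)` for a natural-number threshold `k`. -/
noncomputable def Ptail (μ : ℝ) (k : ℕ) : ℝ :=
  ∑' r : ℕ, if k ≤ r then poissonPMF μ r else 0

/-- Expected shortage `E[(D - Q)^+]` for a natural-number capacity `Q`. -/
noncomputable def shortage (μ : ℝ) (Q : ℕ) : ℝ :=
  ∑' r : ℕ, if Q ≤ r then ((r : ℝ) - (Q : ℝ)) * poissonPMF μ r else 0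

noncomputable def pcdf (k : ℕ) (μ : ℝ) : ℝ := ∑ r ∈ Finset.range k, poissonPMF μ r

noncomputable def sHelp (Q : ℕ) (μ : ℝ) : ℝ :=
  μ - Q + ∑ r ∈ Finset.range Q, ((Q : ℝ) - r) * poissonPMF μ r

lemma exp_tsum (μ : ℝ) : ∑' n : ℕ, μ ^ n / (n.factorial : ℝ) = Real.exp μ := by
  rw [Real.exp_eq_exp_ℝ, NormedSpace.exp_eq_tsum_div]

lemma pmf_eq (μ : ℝ) (r : ℕ) : poissonPMF μ r = Real.exp (-μ) * (μ ^ r / r.factorial) := by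
  unfold poissonPMF; ring

lemma summable_pmf (μ : ℝ) : Summable (fun r => poissonPMF μ r) := by
  simp only [pmf_eq]
  exact (Real.summable_pow_div_factorial μ).mul_left _

lemma tsum_pmf (μ : ℝ) : ∑' r : ℕ, poissonPMF μ r = 1 := by
  simp only [pmf_eq]
  rw [tsum_mul_left, exp_tsum, ← Real.exp_add]
  simp

lemma summable_mul_pmf (μ : ℝ) : Summable (fun r : ℕ => (r : ℝ) * poissonPMF μ r) := by
  rw [← summable_nat_add_iff 1]
  have : (fun n : ℕ => ((n + 1 : ℕ) : ℝ) * poissonPMF μ (n + 1))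
      = fun n : ℕ => μ * poissonPMF μ n := by
    funext n
    simp only [pmf_eq, Nat.factorial_succ, pow_succ]
    push_cast
    have h1 : ((n : ℝ) + 1) ≠ 0 := by positivity
    field_simp
  rw [this]
  exact (summable_pmf μ).mul_left μ

lemma tsum_mul_pmf (μ : ℝ) : ∑' r : ℕ, (r : ℝ) * poissonPMF μ r = μ := by
  rw [Summable.tsum_eq_zero_add (summable_mul_pmf μ)]
  have : (fun n : ℕ => ((n : ℝ) + 1) * poissonPMF μ (n + 1))
      = fun n : ℕ => μ * poissonPMF μ n := by
    funext n
    simp only [pmf_eq, Nat.factorial_succ, pow_succ]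
    push_cast
    have h1 : ((n : ℝ) + 1) ≠ 0 := by positivity
    field_simp
  push_cast
  rw [this, tsum_mul_left, tsum_pmf]
  simp

lemma Ptail_eq (μ : ℝ) (k : ℕ) : Ptail μ k = 1 - pcdf k μ := by
  have hsum := summable_pmf μ
  have hfin : ∑' r : ℕ, (if r ∈ Finset.range k then poissonPMF μ r else 0)
      = pcdf k μ := by
    rw [tsum_eq_sum (s := Finset.range k) (by intro b hb; simp [hb])]
    unfold pcdf
    exact Finset.sum_congr rfl (by intro x hx; simp [hx])
  have hsum2 : Summable (fun r : ℕ => if r ∈ Finset.range k then poissonPMF μ r else 0) :=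
    summable_of_ne_finset_zero (s := Finset.range k) (by intro b hb; simp [hb])
  have key : (fun r : ℕ => if k ≤ r then poissonPMF μ r else 0)
      = fun r : ℕ => poissonPMF μ r - (if r ∈ Finset.range k then poissonPMF μ r else 0) := by
    funext r
    by_cases h : k ≤ r <;> simp [h, Finset.mem_range, Nat.lt_of_not_le, not_le.mpr,
      Nat.not_lt.mpr]
  unfold Ptail
  rw [key, Summable.tsum_sub hsum hsum2, tsum_pmf, hfin]

lemma shortage_eq (μ : ℝ) (Q : ℕ) : shortage μ Q = sHelp Q μ := by
  have hsum : Summable (fun r : ℕ => ((r : ℝ) - Q) * poissonPMF μ r) := by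
    have : (fun r : ℕ => ((r : ℝ) - Q) * poissonPMF μ r)
        = fun r : ℕ => (r : ℝ) * poissonPMF μ r - (Q : ℝ) * poissonPMF μ r := by
      funext r; ring
    rw [this]
    exact (summable_mul_pmf μ).sub ((summable_pmf μ).mul_left _)
  have hsum2 : Summable (fun r : ℕ =>
      if r ∈ Finset.range Q then ((Q : ℝ) - r) * poissonPMF μ r else 0) :=
    summable_of_ne_finset_zero (s := Finset.range Q) (by intro b hb; simp [hb])
  have key : (fun r : ℕ => if Q ≤ r then ((r : ℝ) - Q) * poissonPMF μ r else 0)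
      = fun r : ℕ => ((r : ℝ) - Q) * poissonPMF μ r
          + (if r ∈ Finset.range Q then ((Q : ℝ) - r) * poissonPMF μ r else 0) := by
    funext r
    by_cases h : Q ≤ r
    · simp [h, Finset.mem_range, Nat.not_lt.mpr h]
    · have hr : r ∈ Finset.range Q := Finset.mem_range.mpr (Nat.lt_of_not_le h)
      simp only [if_neg h, if_pos hr]
      ring
  unfold shortage
  rw [key, Summable.tsum_add hsum hsum2]
  have h1 : ∑' r : ℕ, ((r : ℝ) - Q) * poissonPMF μ r = μ - Q := by
    have : (fun r : ℕ => ((r : ℝ) - Q) * poissonPMF μ r)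
        = fun r : ℕ => (r : ℝ) * poissonPMF μ r - (Q : ℝ) * poissonPMF μ r := by
      funext r; ring
    rw [this, Summable.tsum_sub (summable_mul_pmf μ) ((summable_pmf μ).mul_left _),
      tsum_mul_pmf, tsum_mul_left, tsum_pmf]
    ring
  have h2 : ∑' r : ℕ, (if r ∈ Finset.range Q then ((Q : ℝ) - r) * poissonPMF μ r else 0)
      = ∑ r ∈ Finset.range Q, ((Q : ℝ) - r) * poissonPMF μ r := by
    rw [tsum_eq_sum (s := Finset.range Q) (by intro b hb; simp [hb])]
    exact Finset.sum_congr rfl (by intro x hx; simp [hx])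
  rw [h1, h2]
  unfold sHelp
  ring

lemma hasDerivAt_pmf_zero (μ : ℝ) :
    HasDerivAt (fun x => poissonPMF x 0) (-poissonPMF μ 0) μ := by
  have h : (fun x => poissonPMF x 0) = fun x => Real.exp (-x) := by
    funext x; unfold poissonPMF; simp
  rw [h]
  have := ((Real.hasDerivAt_exp (-μ)).comp μ ((hasDerivAt_id μ).neg))
  simpa [poissonPMF, Function.comp_def] using this

lemma hasDerivAt_pmf_succ (μ : ℝ) (r : ℕ) :
    HasDerivAt (fun x => poissonPMF x (r + 1))
      (poissonPMF μ r - poissonPMF μ (r + 1)) μ := by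
  have hexp : HasDerivAt (fun x : ℝ => Real.exp (-x)) (-Real.exp (-μ)) μ := by
    have := ((Real.hasDerivAt_exp (-μ)).comp μ ((hasDerivAt_id μ).neg))
    simpa [Function.comp_def] using this
  have hpow : HasDerivAt (fun x : ℝ => x ^ (r + 1)) (((r : ℝ) + 1) * μ ^ r) μ := by
    have := hasDerivAt_pow (r + 1) μ
    simpa using this
  have hmul := hexp.mul hpow
  have h := hmul.div_const ((r + 1).factorial : ℝ)
  have hfun : (fun x => poissonPMF x (r + 1))
      = fun x => Real.exp (-x) * x ^ (r + 1) / ((r + 1).factorial : ℝ) := by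
    funext x; unfold poissonPMF; norm_num
  rw [hfun]
  refine h.congr_deriv ?_
  unfold poissonPMF
  have hfac : (((r + 1).factorial : ℝ)) = ((r + 1 : ℕ) : ℝ) * (r.factorial : ℝ) := by
    rw [Nat.factorial_succ]; push_cast; ring
  have h1 : (r.factorial : ℝ) ≠ 0 := Nat.cast_ne_zero.mpr r.factorial_ne_zero
  have h2 : ((r + 1 : ℕ) : ℝ) ≠ 0 := by positivity
  field_simp [hfac]
  rw [Nat.factorial_succ]; push_cast
  ring

lemma hasDerivAt_pcdf (k : ℕ) (μ : ℝ) :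
    HasDerivAt (fun x => pcdf (k + 1) x) (-poissonPMF μ k) μ := by
  induction k with
  | zero =>
    have h : (fun x => pcdf 1 x) = fun x => poissonPMF x 0 := by
      funext x; unfold pcdf; simp
    rw [h]; exact hasDerivAt_pmf_zero μ
  | succ n ih =>
    have h : (fun x => pcdf (n + 2) x) = fun x => pcdf (n + 1) x + poissonPMF x (n + 1) := by
      funext x; unfold pcdf; rw [Finset.sum_range_succ]
    rw [h]
    have := ih.add (hasDerivAt_pmf_succ μ n)
    refine this.congr_deriv ?_
    ring

lemma sHelp_succ (Q : ℕ) (μ : ℝ) :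
    sHelp (Q + 1) μ = sHelp Q μ - (1 - pcdf (Q + 1) μ) := by
  unfold sHelp pcdf
  have h1 : ∑ r ∈ Finset.range (Q + 1), (((Q : ℝ) + 1) - r) * poissonPMF μ r
      = ∑ r ∈ Finset.range (Q + 1), (((Q : ℝ) - r) * poissonPMF μ r + poissonPMF μ r) := by
    exact Finset.sum_congr rfl (by intro x hx; ring)
  push_cast
  rw [h1, Finset.sum_add_distrib, Finset.sum_range_succ (fun r => ((Q : ℝ) - r) * poissonPMF μ r)]
  ring

lemma hasDerivAt_sHelp (Q : ℕ) (μ : ℝ) :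
    HasDerivAt (fun x => sHelp Q x) (1 - pcdf Q μ) μ := by
  induction Q with
  | zero =>
    have h : (fun x => sHelp 0 x) = fun x => x := by
      funext x; unfold sHelp; simp
    rw [h]
    simpa [pcdf] using (hasDerivAt_id' μ)
  | succ n ih =>
    have h : (fun x => sHelp (n + 1) x) = fun x => sHelp n x - (1 - pcdf (n + 1) x) := by
      funext x; exact sHelp_succ n x
    rw [h]
    have := ih.sub ((hasDerivAt_const μ (1 : ℝ)).sub (hasDerivAt_pcdf n μ))
    refine this.congr_deriv ?_
    have : pcdf (n + 1) μ = pcdf n μ + poissonPMF μ n := by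
      unfold pcdf; rw [Finset.sum_range_succ]
    rw [this]
    ring

lemma mu_pmf (μ : ℝ) (r : ℕ) :
    μ * poissonPMF μ r = ((r : ℝ) + 1) * poissonPMF μ (r + 1) := by
  unfold poissonPMF
  have hfac : (((r + 1).factorial : ℝ)) = ((r : ℝ) + 1) * (r.factorial : ℝ) := by
    rw [Nat.factorial_succ]; push_cast; ring
  have h1 : (r.factorial : ℝ) ≠ 0 := Nat.cast_ne_zero.mpr r.factorial_ne_zero
  have h2 : ((r : ℝ) + 1) ≠ 0 := by positivity
  rw [hfac]
  field_simp
  ring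

lemma key_id (Q : ℕ) (μ : ℝ) :
    μ * (1 - pcdf Q μ) - sHelp Q μ = (Q : ℝ) * (1 - pcdf (Q + 1) μ) := by
  induction Q with
  | zero => unfold sHelp pcdf; simp
  | succ n ih =>
    have h1 : pcdf (n + 1) μ = pcdf n μ + poissonPMF μ n := by
      unfold pcdf; rw [Finset.sum_range_succ]
    have h2 : pcdf (n + 2) μ = pcdf (n + 1) μ + poissonPMF μ (n + 1) := by
      unfold pcdf; rw [Finset.sum_range_succ]
    have h3 := sHelp_succ n μ
    have h4 := mu_pmf μ n
    have goal : μ * (1 - pcdf (n + 1) μ) - sHelp (n + 1) μ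
        = (μ * (1 - pcdf n μ) - sHelp n μ) - μ * poissonPMF μ n + (1 - pcdf (n + 1) μ) := by
      rw [h3, h1]; ring
    rw [goal, ih, h4, h2]
    push_cast
    ring

lemma pmf_pos {μ : ℝ} (hμ : 0 < μ) (r : ℕ) : 0 < poissonPMF μ r := by
  unfold poissonPMF
  have := r.factorial_pos
  positivity

lemma pcdf_zero (k : ℕ) : pcdf (k + 1) 0 = 1 := by
  induction k with
  | zero => unfold pcdf poissonPMF; simp
  | succ n ih =>
    unfold pcdf at *
    rw [Finset.sum_range_succ, ih]
    unfold poissonPMF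
    simp

lemma tendsto_pmf_atTop (r : ℕ) :
    Filter.Tendsto (fun x : ℝ => poissonPMF x r) Filter.atTop (nhds 0) := by
  have h := (Real.tendsto_pow_mul_exp_neg_atTop_nhds_zero r).div_const (r.factorial : ℝ)
  have heq : (fun x : ℝ => poissonPMF x r) = fun x => x ^ r * Real.exp (-x) / (r.factorial : ℝ) := by
    funext x; unfold poissonPMF; ring
  rw [heq]
  simpa using h

lemma tendsto_pcdf_atTop (k : ℕ) :
    Filter.Tendsto (fun x : ℝ => pcdf k x) Filter.atTop (nhds 0) := by
  have : (fun x : ℝ => pcdf k x) = fun x => ∑ r ∈ Finset.range k, poissonPMF x r := rfl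
  rw [this]
  have := tendsto_finset_sum (Finset.range k)
    (fun r _ => tendsto_pmf_atTop r)
  simpa using this

/-- existence and uniqueness of an optimal cycle length, which is
the strict global minimizer of the fixed-cycle average cost. -/
theorem optimal_cycle_length (J : ℕ) (hJ : 1 ≤ J)
    (lam : Fin J → ℝ) (hlam : ∀ j, 0 < lam j)
    (b : Fin J → ℝ) (hb : ∀ j, 0 < b j)
    (Q : Fin J → ℕ) (hQ : ∀ j, 1 ≤ Q j)
    (A : ℝ) (hA0 : 0 < A) (hA : A < ∑ j, b j * (Q j : ℝ)) :
    ∃ Tstar : ℝ, 0 < Tstar ∧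
      (∑ j, b j * (Q j : ℝ) * Ptail (lam j * Tstar) (Q j + 1)) = A ∧
      (∀ T : ℝ, 0 < T →
        (∑ j, b j * (Q j : ℝ) * Ptail (lam j * T) (Q j + 1)) = A → T = Tstar) ∧
      (∀ T : ℝ, 0 < T → T ≠ Tstar →
        (A + ∑ j, b j * shortage (lam j * Tstar) (Q j)) / Tstar
          < (A + ∑ j, b j * shortage (lam j * T) (Q j)) / T) := by
  have hne : (Finset.univ : Finset (Fin J)).Nonempty := by
    have : Nonempty (Fin J) := Fin.pos_iff_nonempty.mp hJ
    exact Finset.univ_nonempty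
  set g : ℝ → ℝ := fun T => ∑ j, b j * (Q j : ℝ) * (1 - pcdf (Q j + 1) (lam j * T)) with hgdef
  have hgPtail : ∀ T, (∑ j, b j * (Q j : ℝ) * Ptail (lam j * T) (Q j + 1)) = g T := by
    intro T
    exact Finset.sum_congr rfl (fun j _ => by rw [Ptail_eq])
  set g' : ℝ → ℝ := fun T => ∑ j, b j * (Q j : ℝ) * (lam j * poissonPMF (lam j * T) (Q j))
    with hg'def
  have hgderiv : ∀ T, HasDerivAt g (g' T) T := by
    intro T
    apply HasDerivAt.fun_sum
    intro j _
    have hinner : HasDerivAt (fun T : ℝ => lam j * T) (lam j) T := by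
      simpa using (hasDerivAt_id T).const_mul (lam j)
    have hc : HasDerivAt (fun T : ℝ => pcdf (Q j + 1) (lam j * T))
        (-poissonPMF (lam j * T) (Q j) * lam j) T :=
      (hasDerivAt_pcdf (Q j) (lam j * T)).comp T hinner
    have := ((hasDerivAt_const T (1:ℝ)).sub hc).const_mul (b j * (Q j : ℝ))
    refine this.congr_deriv ?_
    ring
  have hgdiff : Differentiable ℝ g := fun T => (hgderiv T).differentiableAt
  have hgcont : Continuous g := hgdiff.continuous
  have hg'pos : ∀ T : ℝ, 0 < T → 0 < g' T := by
    intro T hT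
    apply Finset.sum_pos _ hne
    intro j _
    have h1 : 0 < lam j * T := mul_pos (hlam j) hT
    have h2 : (0:ℝ) < (Q j : ℝ) := by exact_mod_cast (hQ j)
    have h3 := pmf_pos h1 (Q j)
    exact mul_pos (mul_pos (hb j) h2) (mul_pos (hlam j) h3)
  have hgmono : StrictMonoOn g (Set.Ici 0) := by
    apply strictMonoOn_of_deriv_pos (convex_Ici 0) hgcont.continuousOn
    intro x hx
    rw [interior_Ici] at hx
    rw [(hgderiv x).deriv]
    exact hg'pos x hx
  have hg0 : g 0 = 0 := by
    rw [hgdef]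
    simp only [mul_zero]
    apply Finset.sum_eq_zero
    intro j _
    rw [pcdf_zero]
    ring
  -- limit of g at infinity
  have hL : Filter.Tendsto g Filter.atTop (nhds (∑ j, b j * (Q j : ℝ))) := by
    have : ∀ j : Fin J, Filter.Tendsto (fun T : ℝ => b j * (Q j : ℝ) * (1 - pcdf (Q j + 1) (lam j * T)))
        Filter.atTop (nhds (b j * (Q j : ℝ))) := by
      intro j
      have hmul : Filter.Tendsto (fun T : ℝ => lam j * T) Filter.atTop Filter.atTop :=
        Filter.Tendsto.const_mul_atTop (hlam j) Filter.tendsto_id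
      have h1 : Filter.Tendsto (fun T : ℝ => pcdf (Q j + 1) (lam j * T)) Filter.atTop (nhds 0) :=
        (tendsto_pcdf_atTop (Q j + 1)).comp hmul
      have h2 := ((tendsto_const_nhds (x := (1:ℝ)) (f := Filter.atTop)).sub h1).const_mul
        (b j * (Q j : ℝ))
      simpa using h2
    have := tendsto_finset_sum Finset.univ (fun j _ => this j)
    exact this
  have hbig : ∃ T1 : ℝ, 0 < T1 ∧ A < g T1 := by
    have hev : ∀ᶠ T in Filter.atTop, A < g T := hL.eventually (eventually_gt_nhds hA)
    obtain ⟨T1, hT1, hT1'⟩ := (hev.and (Filter.eventually_ge_atTop (1:ℝ))).exists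
    exact ⟨T1, lt_of_lt_of_le one_pos hT1', hT1⟩
  obtain ⟨T1, hT1pos, hT1⟩ := hbig
  -- IVT
  have hivt : ∃ Tstar ∈ Set.Icc (0:ℝ) T1, g Tstar = A := by
    have := intermediate_value_Icc (le_of_lt hT1pos) hgcont.continuousOn
    have hmem : A ∈ Set.Icc (g 0) (g T1) := by
      rw [hg0]; exact ⟨le_of_lt hA0, le_of_lt hT1⟩
    obtain ⟨Tstar, hTmem, hTval⟩ := this hmem
    exact ⟨Tstar, hTmem, hTval⟩
  obtain ⟨Tstar, hTmem, hgTstar⟩ := hivt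
  have hTstarpos : 0 < Tstar := by
    rcases lt_or_eq_of_le hTmem.1 with h | h
    · exact h
    · exfalso; rw [← h, hg0] at hgTstar; exact absurd hgTstar.symm (ne_of_gt hA0)
  -- the cost function
  set C : ℝ → ℝ := fun T => (A + ∑ j, b j * shortage (lam j * T) (Q j)) / T with hCdef
  have hCeq : C = fun T => (A + ∑ j, b j * sHelp (Q j) (lam j * T)) / T := by
    funext T
    simp only [hCdef, shortage_eq]
  have hCderiv : ∀ T : ℝ, T ≠ 0 → HasDerivAt C ((g T - A) / T ^ 2) T := by
    intro T hT0
    have hN : HasDerivAt (fun T : ℝ => A + ∑ j, b j * sHelp (Q j) (lam j * T))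
        (∑ j, b j * (lam j * (1 - pcdf (Q j) (lam j * T)))) T := by
      apply HasDerivAt.const_add
      apply HasDerivAt.fun_sum
      intro j _
      have hinner : HasDerivAt (fun T : ℝ => lam j * T) (lam j) T := by
        simpa using (hasDerivAt_id T).const_mul (lam j)
      have hs : HasDerivAt (fun T : ℝ => sHelp (Q j) (lam j * T))
          ((1 - pcdf (Q j) (lam j * T)) * lam j) T :=
        (hasDerivAt_sHelp (Q j) (lam j * T)).comp T hinner
      have := hs.const_mul (b j)
      refine this.congr_deriv ?_
      ring
    have hdiv := hN.div (hasDerivAt_id T) hT0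
    rw [hCeq]
    refine hdiv.congr_deriv ?_
    have hkey : (∑ j, b j * (lam j * (1 - pcdf (Q j) (lam j * T)))) * T
        - (A + ∑ j, b j * sHelp (Q j) (lam j * T)) = g T - A := by
      have hterm : ∀ j : Fin J, b j * (lam j * (1 - pcdf (Q j) (lam j * T))) * T
          - b j * sHelp (Q j) (lam j * T)
          = b j * (Q j : ℝ) * (1 - pcdf (Q j + 1) (lam j * T)) := by
        intro j
        have hk := key_id (Q j) (lam j * T)
        calc b j * (lam j * (1 - pcdf (Q j) (lam j * T))) * T
            - b j * sHelp (Q j) (lam j * T)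
            = b j * ((lam j * T) * (1 - pcdf (Q j) (lam j * T)) - sHelp (Q j) (lam j * T)) := by
              ring
          _ = b j * ((Q j : ℝ) * (1 - pcdf (Q j + 1) (lam j * T))) := by rw [hk]
          _ = b j * (Q j : ℝ) * (1 - pcdf (Q j + 1) (lam j * T)) := by ring
      calc (∑ j, b j * (lam j * (1 - pcdf (Q j) (lam j * T)))) * T
          - (A + ∑ j, b j * sHelp (Q j) (lam j * T))
          = (∑ j, (b j * (lam j * (1 - pcdf (Q j) (lam j * T))) * T
              - b j * sHelp (Q j) (lam j * T))) - A := by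
            rw [Finset.sum_sub_distrib, Finset.sum_mul]; ring
        _ = (∑ j, b j * (Q j : ℝ) * (1 - pcdf (Q j + 1) (lam j * T))) - A :=
            by rw [Finset.sum_congr rfl (fun j _ => hterm j)]
        _ = g T - A := rfl
    rw [← hkey]
    simp [id]
  -- monotonicity on both sides of Tstar
  have hCmono : StrictMonoOn C (Set.Ici Tstar) := by
    apply strictMonoOn_of_deriv_pos (convex_Ici Tstar)
    · intro x hx
      have hx0 : x ≠ 0 := ne_of_gt (lt_of_lt_of_le hTstarpos hx)
      exact ((hCderiv x hx0).differentiableAt.continuousAt).continuousWithinAt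
    · intro x hx
      rw [interior_Ici] at hx
      have hx0 : (0:ℝ) < x := lt_trans hTstarpos hx
      rw [(hCderiv x (ne_of_gt hx0)).deriv]
      have hgx : A < g x := by
        rw [← hgTstar]
        exact hgmono (Set.mem_Ici.mpr (le_of_lt hTstarpos)) (Set.mem_Ici.mpr (le_of_lt hx0)) hx
      exact div_pos (by linarith) (pow_pos hx0 2)
  have hCanti : StrictAntiOn C (Set.Ioc 0 Tstar) := by
    apply strictAntiOn_of_deriv_neg (convex_Ioc 0 Tstar)
    · intro x hx
      exact ((hCderiv x (ne_of_gt hx.1)).differentiableAt.continuousAt).continuousWithinAt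
    · intro x hx
      rw [interior_Ioc] at hx
      rw [(hCderiv x (ne_of_gt hx.1)).deriv]
      have hgx : g x < A := by
        rw [← hgTstar]
        exact hgmono (Set.mem_Ici.mpr (le_of_lt hx.1)) (Set.mem_Ici.mpr (le_of_lt hTstarpos))
          hx.2
      exact div_neg_of_neg_of_pos (by linarith) (pow_pos hx.1 2)
  refine ⟨Tstar, hTstarpos, ?_, ?_, ?_⟩
  · rw [hgPtail]; exact hgTstar
  · intro T hT hgT
    rw [hgPtail] at hgT
    exact hgmono.injOn (Set.mem_Ici.mpr (le_of_lt hT)) (Set.mem_Ici.mpr (le_of_lt hTstarpos))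
      (by rw [hgT, hgTstar])
  · intro T hT hneT
    have : C Tstar < C T := by
      rcases lt_or_gt_of_ne hneT with h | h
      · exact hCanti ⟨hT, le_of_lt h⟩ ⟨hTstarpos, le_refl _⟩ h
      · exact hCmono (Set.mem_Ici.mpr (le_refl _)) (Set.mem_Ici.mpr (le_of_lt h)) h
    exact this
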